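/- arXiv:2511.22058 — 9 statements merged into one kernel-verified Lean document; each statement's English description precedes it below -/
import Mathlib

section
/- Let $(X, \Sigma, \mu)$ be a measure space and $\mathcal{F} \subseteq \mathcal{P}(X)$. There exists a measure space $(X, \Sigma', \mu')$ with $\Sigma \subseteq \Sigma'$, $\mu'$ extending $\mu$, and every member of $\mathcal{F}$ a $\mu'$-null set, if and only if: whenever $E \in \Sigma$ is covered by a countable union of members of $\mathcal{F}$, then $\mu(E) = 0$. -/
/-!
Necessity: a set covered by countably many `μ'`-null sets is `μ'`-null. Sufficiency: take the
outer measure generated by the gauge that is `0` on subsets of members of `F` and `μ` elsewhere.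
Measurable sets split that gauge additively, so they are Carathéodory measurable, and members of
`F` are null. The hypothesis is exactly what prevents this outer measure from dropping below `μ`
on a measurable set `E`: given a cover of `E`, the part of `E` outside a measurable hull of the
pieces not contained in a member of `F` is covered by countably many members of `F`, hence
`μ`-null.
-/

open MeasureTheory Set

open scoped ENNReal

namespace MeasureTheory

theorem OuterMeasure.isCaratheodory_of_null {X : Type*} (ν : OuterMeasure X) {N : Set X}
    (hN : ν N = 0) : MeasurableSet[ν.caratheodory] N := by
  refine (OuterMeasure.isCaratheodory_iff_le ν).2 fun t => ?_
  rw [measure_mono_null inter_subset_right hN, zero_add]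
  exact measure_mono sdiff_subset

section Nullifying

variable {X : Type*} [MeasurableSpace X] (μ : Measure X) (F : Set (Set X))

def NullOnCountableCovers : Prop :=
  ∀ E : Set X, MeasurableSet E → ∀ f : ℕ → Set X, (∀ n, f n ∈ F) → E ⊆ ⋃ n, f n → μ E = 0

theorem measure_eq_zero_of_subset_iUnion_of_forall_nat
    (hF : NullOnCountableCovers μ F)
    {ι : Type*} [Countable ι] (N : ι → Set X) (hNF : ∀ i, N i ∈ F)
    {E : Set X} (hE : MeasurableSet E) (hEN : E ⊆ ⋃ i, N i) : μ E = 0 := by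
  cases isEmpty_or_nonempty ι
  · exact measure_mono_null (by simpa using hEN) measure_empty
  · obtain ⟨f, hf⟩ := exists_surjective_nat ι
    exact hF E hE (N ∘ f) (fun n => hNF (f n)) (hf.iUnion_comp N ▸ hEN)

/-- Vanishing on all subsets of members of `F`, not only on the members, is what lets measurable
sets split this gauge additively. -/
noncomputable def nullifyingGauge (A : Set X) : ℝ≥0∞ :=
  open Classical in if ∃ N ∈ F, A ⊆ N then 0 else μ A

theorem nullifyingGauge_empty : nullifyingGauge μ F ∅ = 0 := by
  unfold nullifyingGauge
  split_ifs <;> simp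

theorem nullifyingGauge_le (A : Set X) : nullifyingGauge μ F A ≤ μ A := by
  unfold nullifyingGauge
  split_ifs <;> simp

theorem nullifyingGauge_inter_add_diff_le {E : Set X} (hE : MeasurableSet E) (t : Set X) :
    nullifyingGauge μ F (t ∩ E) + nullifyingGauge μ F (t \ E) ≤ nullifyingGauge μ F t := by
  by_cases ht : ∃ N ∈ F, t ⊆ N
  · obtain ⟨N, hNF, htN⟩ := ht
    simp only [nullifyingGauge]
    rw [if_pos ⟨N, hNF, inter_subset_left.trans htN⟩, if_pos ⟨N, hNF, sdiff_subset.trans htN⟩]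
    simp
  · calc nullifyingGauge μ F (t ∩ E) + nullifyingGauge μ F (t \ E)
        ≤ μ (t ∩ E) + μ (t \ E) := add_le_add (nullifyingGauge_le μ F _) (nullifyingGauge_le μ F _)
      _ = μ t := measure_inter_add_sdiff t hE
      _ = nullifyingGauge μ F t := by simp only [nullifyingGauge, if_neg ht]

noncomputable def nullifyingOuterMeasure : OuterMeasure X :=
  OuterMeasure.ofFunction (nullifyingGauge μ F) (nullifyingGauge_empty μ F)

theorem nullifyingOuterMeasure_le (A : Set X) : nullifyingOuterMeasure μ F A ≤ μ A :=
  (OuterMeasure.ofFunction_le A).trans (nullifyingGauge_le μ F A)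

theorem nullifyingOuterMeasure_eq_zero_of_mem {N : Set X} (hN : N ∈ F) :
    nullifyingOuterMeasure μ F N = 0 := by
  refine nonpos_iff_eq_zero.1 ((OuterMeasure.ofFunction_le N).trans ?_)
  rw [nullifyingGauge, if_pos ⟨N, hN, subset_rfl⟩]

theorem le_nullifyingOuterMeasure
    (hF : NullOnCountableCovers μ F)
    {E : Set X} (hE : MeasurableSet E) : μ E ≤ nullifyingOuterMeasure μ F E := by
  classical
  refine le_iInf₂ fun B hEB => ?_
  let small (i : ℕ) : Prop := ∃ N ∈ F, B i ⊆ N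
  let S := ⋃ i, if small i then ∅ else B i
  choose N hNF hBN using fun i : {i // small i} => i.2
  have hnull : μ (E \ toMeasurable μ S) = 0 := by
    refine measure_eq_zero_of_subset_iUnion_of_forall_nat μ F hF N hNF
      (hE.diff (measurableSet_toMeasurable μ S)) fun x ⟨hxE, hxS⟩ => ?_
    obtain ⟨i, hxi⟩ := mem_iUnion.1 (hEB hxE)
    by_cases hi : small i
    · exact mem_iUnion.2 ⟨⟨i, hi⟩, hBN ⟨i, hi⟩ hxi⟩
    · exact absurd (subset_toMeasurable μ S (mem_iUnion.2 ⟨i, by simpa [hi] using hxi⟩)) hxS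
  calc μ E ≤ μ (toMeasurable μ S ∪ E \ toMeasurable μ S) :=
        measure_mono (sdiff_subset_iff.1 subset_rfl)
    _ ≤ μ (toMeasurable μ S) + μ (E \ toMeasurable μ S) := measure_union_le _ _
    _ = μ S := by rw [hnull, add_zero, measure_toMeasurable]
    _ ≤ ∑' i, μ (if small i then ∅ else B i) := measure_iUnion_le _
    _ = ∑' i, nullifyingGauge μ F (B i) := by
        refine tsum_congr fun i => ?_
        by_cases hi : small i
        · rw [if_pos hi, nullifyingGauge, if_pos hi, measure_empty]
        · rw [if_neg hi, nullifyingGauge, if_neg hi]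

theorem le_caratheodory_nullifyingOuterMeasure :
    ‹MeasurableSpace X› ≤ (nullifyingOuterMeasure μ F).caratheodory :=
  fun _ hE => OuterMeasure.ofFunction_caratheodory (nullifyingGauge_inter_add_diff_le μ F hE)

noncomputable def nullifyingMeasure : @Measure X (nullifyingOuterMeasure μ F).caratheodory :=
  (nullifyingOuterMeasure μ F).toMeasure (ms := _) le_rfl

theorem nullifyingMeasure_apply_of_measurableSet
    (hF : NullOnCountableCovers μ F)
    {E : Set X} (hE : MeasurableSet E) : nullifyingMeasure μ F E = μ E := by
  rw [nullifyingMeasure,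
    toMeasure_apply (ms := _) _ _ (le_caratheodory_nullifyingOuterMeasure μ F E hE)]
  exact (nullifyingOuterMeasure_le μ F E).antisymm (le_nullifyingOuterMeasure μ F hF hE)

theorem nullifyingOuterMeasure_caratheodory_of_mem {N : Set X} (hN : N ∈ F) :
    MeasurableSet[(nullifyingOuterMeasure μ F).caratheodory] N :=
  OuterMeasure.isCaratheodory_of_null _ (nullifyingOuterMeasure_eq_zero_of_mem μ F hN)

theorem nullifyingMeasure_eq_zero_of_mem {N : Set X} (hN : N ∈ F) :
    nullifyingMeasure μ F N = 0 := by
  rw [nullifyingMeasure,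
    toMeasure_apply (ms := _) _ _ (nullifyingOuterMeasure_caratheodory_of_mem μ F hN)]
  exact nullifyingOuterMeasure_eq_zero_of_mem μ F hN

end Nullifying

end MeasureTheory

theorem stmt4 {X : Type*} [m : MeasurableSpace X] (μ : Measure X) (F : Set (Set X)) :
    (∃ (m' : MeasurableSpace X) (μ' : @Measure X m'),
      (∀ s : Set X, MeasurableSet[m] s → MeasurableSet[m'] s) ∧
      (∀ s : Set X, MeasurableSet[m] s → μ' s = μ s) ∧
      (∀ N ∈ F, MeasurableSet[m'] N ∧ μ' N = 0)) ↔
    (∀ E : Set X, MeasurableSet[m] E →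
      ∀ f : ℕ → Set X, (∀ n, f n ∈ F) → E ⊆ ⋃ n, f n → μ E = 0) := by
  constructor
  · rintro ⟨m', μ', -, hμ', hF'⟩ E hE f hf hEf
    rw [← hμ' E hE]
    exact measure_mono_null hEf (measure_iUnion_null fun n => (hF' _ (hf n)).2)
  · intro hF
    exact ⟨_, nullifyingMeasure μ F, le_caratheodory_nullifyingOuterMeasure μ F,
      fun _ hE => nullifyingMeasure_apply_of_measurableSet μ F hF hE,
      fun _ hN => ⟨nullifyingOuterMeasure_caratheodory_of_mem μ F hN,
        nullifyingMeasure_eq_zero_of_mem μ F hN⟩⟩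
end

section
/- Let $(X, \Sigma, \mu)$ be a nonatomic (diffuse) probability space and $0 \le p < \infty$. There is no map $\varphi \colon \mathcal{L}^p(\mathbb{R}, \mu) \to \mathcal{L}^p(\mathbb{R}, \mu)$ satisfying: (1) $\varphi(f) = f$ $\mu$-almost everywhere for every $f$, and (2) $f_1 \le f_2$ $\mu$-almost everywhere implies $\varphi(f_1) \le \varphi(f_2)$ pointwise everywhere. -/
open MeasureTheory
open scoped ENNReal

/-- Membership in `ℒ^p(ℝ, μ)` for `0 ≤ p < ∞`: a measurable real-valued function with
`∫ |f|^p dμ < ∞` (for `p = 0` this is just measurability, since the measure is finite). -/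
def MemLpReal {X : Type*} [MeasurableSpace X] (μ : Measure X) (p : ℝ) (f : X → ℝ) : Prop :=
  Measurable f ∧ ∫⁻ x, ENNReal.ofReal (|f x| ^ p) ∂μ < ⊤

/-!
Since `μ` is diffuse, for every `k` the space is covered, up to a null set, by countably many
measurable sets `T k i` of measure at most `2⁻ᵏ / k ^ (p + 1)`. The countably many test functions
`k • 𝟙_{T k i}` are all fixed by `φ` at almost every point; pick such a point `x₀` and, for each
`k`, a set `S k := T k (i k)` containing it. Then `f := ⨆ k, k • 𝟙_{S k}` is finite a.e., lies in
`L^(p+1) ⊆ L^p` and dominates every `k • 𝟙_{S k}` a.e., so monotonicity of `φ` forces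
`φ f x₀ ≥ k` for every `k`.
-/

open Filter Topology

namespace MeasureTheory

section Exhaustion

variable {X : Type*} [MeasurableSpace X] {μ : Measure X}

theorem exists_isMaxOn_measure_of_iUnion_mem {𝒞 : Set (Set X)} (hne : 𝒞.Nonempty)
    (hU : ∀ s : ℕ → Set X, (∀ n, s n ∈ 𝒞) → ⋃ n, s n ∈ 𝒞) :
    ∃ s ∈ 𝒞, IsMaxOn μ 𝒞 s := by
  obtain ⟨u, -, hu_lim, hu_mem⟩ :=
    exists_seq_tendsto_sSup (hne.image μ) (OrderTop.bddAbove (μ '' 𝒞))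
  choose s hs_mem hs_eq using hu_mem
  refine ⟨⋃ n, s n, hU s hs_mem, isMaxOn_iff.2 fun t ht => ?_⟩
  refine (le_sSup (Set.mem_image_of_mem μ ht)).trans (le_of_tendsto' hu_lim fun n => ?_)
  exact hs_eq n ▸ measure_mono (Set.subset_iUnion s n)

def Measure.IsDiffuse (μ : Measure X) : Prop :=
  ∀ s : Set X, MeasurableSet s → μ s ≠ 0 → ∃ t ⊆ s, MeasurableSet t ∧ μ t ≠ 0 ∧ μ t < μ s

namespace Measure.IsDiffuse

variable (hμ : μ.IsDiffuse) {s : Set X}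
include hμ

theorem exists_subset_two_mul_le (hs : MeasurableSet s) (h0 : μ s ≠ 0) :
    ∃ t ⊆ s, MeasurableSet t ∧ μ t ≠ 0 ∧ 2 * μ t ≤ μ s := by
  obtain ⟨t, hts, ht, ht0, hlt⟩ := hμ s hs h0
  have h_diff : μ (s \ t) = μ s - μ t := measure_sdiff hts ht.nullMeasurableSet (ne_top_of_lt hlt)
  by_cases h : 2 * μ t ≤ μ s
  · exact ⟨t, hts, ht, ht0, h⟩
  · refine ⟨s \ t, Set.sdiff_subset, hs.diff ht, ?_, ?_⟩
    · rw [h_diff]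
      exact (tsub_pos_of_lt hlt).ne'
    · rw [h_diff, ENNReal.mul_sub fun _ _ => ENNReal.ofNat_ne_top, tsub_le_iff_right,
        two_mul (μ s)]
      gcongr
      exact (not_le.1 h).le

theorem exists_subset_le_inv_two_pow_mul (hs : MeasurableSet s) (h0 : μ s ≠ 0) (n : ℕ) :
    ∃ t ⊆ s, MeasurableSet t ∧ μ t ≠ 0 ∧ μ t ≤ 2⁻¹ ^ n * μ s := by
  induction n with
  | zero => exact ⟨s, subset_rfl, hs, h0, by simp⟩
  | succ n ih =>
    obtain ⟨t, hts, ht, ht0, hle⟩ := ih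
    obtain ⟨t', ht't, ht', ht'0, h2⟩ := hμ.exists_subset_two_mul_le ht ht0
    refine ⟨t', ht't.trans hts, ht', ht'0, ?_⟩
    calc μ t' = 2⁻¹ * (2 * μ t') := by
          rw [← mul_assoc, ENNReal.inv_mul_cancel two_ne_zero ENNReal.ofNat_ne_top, one_mul]
      _ ≤ 2⁻¹ * (2⁻¹ ^ n * μ s) := by gcongr 2⁻¹ * ?_; exact h2.trans hle
      _ = 2⁻¹ ^ (n + 1) * μ s := by ring

theorem exists_subset_le (hs : MeasurableSet s) (h0 : μ s ≠ 0) (hfin : μ s ≠ ∞) {ε : ℝ≥0∞}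
    (hε : ε ≠ 0) : ∃ t ⊆ s, MeasurableSet t ∧ μ t ≠ 0 ∧ μ t ≤ ε := by
  have h_lim : Tendsto (fun n : ℕ => (2⁻¹ : ℝ≥0∞) ^ n * μ s) atTop (𝓝 0) := by
    simpa using ENNReal.Tendsto.mul_const
      (ENNReal.tendsto_pow_atTop_nhds_zero_of_lt_one (by norm_num)) (Or.inr hfin)
  obtain ⟨n, hn⟩ := (h_lim.eventually (gt_mem_nhds (pos_iff_ne_zero.2 hε))).exists
  obtain ⟨t, hts, ht, ht0, hle⟩ := hμ.exists_subset_le_inv_two_pow_mul hs h0 n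
  exact ⟨t, hts, ht, ht0, hle.trans hn.le⟩

theorem exists_ae_cover_measure_le [IsFiniteMeasure μ] {ε : ℝ≥0∞} (hε : ε ≠ 0) :
    ∃ T : ℕ → Set X, (∀ i, MeasurableSet (T i)) ∧ (∀ i, μ (T i) ≤ ε) ∧
      ∀ᵐ x ∂μ, ∃ i, x ∈ T i := by
  let 𝒞 : Set (Set X) := (fun T : ℕ → Set X => ⋃ i, T i) ''
    {T | ∀ i, MeasurableSet (T i) ∧ μ (T i) ≤ ε}
  have h_union : ∀ s : ℕ → Set X, (∀ n, s n ∈ 𝒞) → ⋃ n, s n ∈ 𝒞 := by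
    intro s hs
    choose T hT hTs using hs
    refine ⟨fun m => T m.unpair.1 m.unpair.2, fun m => hT _ _, ?_⟩
    simp only [Set.iUnion_unpair fun n i => T n i, hTs]
  obtain ⟨-, ⟨T, hT, rfl⟩, hmax⟩ := exists_isMaxOn_measure_of_iUnion_mem (μ := μ)
    (show 𝒞.Nonempty from ⟨∅, fun _ => ∅, by simp, by simp⟩) h_union
  have hU : MeasurableSet (⋃ i, T i) := MeasurableSet.iUnion fun i => (hT i).1
  refine ⟨T, fun i => (hT i).1, fun i => (hT i).2, ?_⟩
  simp only [← Set.mem_iUnion]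
  change μ (⋃ i, T i)ᶜ = 0
  -- a remainder of positive measure would contain a small set of positive measure, which could
  -- be added to the union of maximal measure
  by_contra h0
  obtain ⟨t, hts, ht, ht0, htε⟩ := hμ.exists_subset_le hU.compl h0 (measure_ne_top _ _) hε
  let T' : ℕ → Set X := fun i => Nat.casesOn i t T
  have h_le : μ (t ∪ ⋃ i, T i) ≤ μ (⋃ i, T i) := by
    rw [show t ∪ ⋃ i, T i = ⋃ i, T' i from Set.union_iUnion_nat_succ T']
    exact isMaxOn_iff.1 hmax _ ⟨T', fun i => Nat.casesOn i ⟨ht, htε⟩ hT, rfl⟩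
  rw [measure_union (Set.disjoint_of_subset_left hts disjoint_compl_left) hU] at h_le
  exact ht0 (nonpos_iff_eq_zero.1
    (ENNReal.le_of_add_le_add_right (measure_ne_top μ _) (by simpa using h_le)))

end Measure.IsDiffuse

end Exhaustion

section NatSupIndicator

variable {X : Type*} {S : ℕ → Set X} {q : ℝ}

noncomputable def natSupIndicator (S : ℕ → Set X) (x : X) : ℝ≥0∞ :=
  ⨆ k : ℕ, (S k).indicator (fun _ => (k : ℝ≥0∞)) x

theorem le_natSupIndicator {k : ℕ} {x : X} (hx : x ∈ S k) : (k : ℝ≥0∞) ≤ natSupIndicator S x :=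
  le_iSup_of_le k (by rw [Set.indicator_of_mem hx])

theorem natSupIndicator_rpow_le_tsum (hq : 0 < q) (x : X) :
    natSupIndicator S x ^ q ≤ ∑' k, (S k).indicator (fun _ => (k : ℝ≥0∞) ^ q) x := by
  rw [natSupIndicator, (ENNReal.monotone_rpow_of_nonneg hq.le).map_iSup_of_continuousAt
    (ENNReal.continuous_rpow_const.continuousAt) (ENNReal.zero_rpow_of_pos hq)]
  refine iSup_le fun k => le_trans ?_ (ENNReal.le_tsum k)
  by_cases hx : x ∈ S k <;> simp [hx, ENNReal.zero_rpow_of_pos hq]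

variable [MeasurableSpace X] {μ : Measure X}

theorem measurable_natSupIndicator (hS : ∀ k, MeasurableSet (S k)) :
    Measurable (natSupIndicator S) :=
  Measurable.iSup fun k => measurable_const.indicator (hS k)

theorem lintegral_natSupIndicator_rpow_le (hS : ∀ k, MeasurableSet (S k)) (hq : 0 < q) :
    ∫⁻ x, natSupIndicator S x ^ q ∂μ ≤ ∑' k : ℕ, (k : ℝ≥0∞) ^ q * μ (S k) := by
  calc ∫⁻ x, natSupIndicator S x ^ q ∂μ
      ≤ ∫⁻ x, ∑' k, (S k).indicator (fun _ => (k : ℝ≥0∞) ^ q) x ∂μ :=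
        lintegral_mono fun x => natSupIndicator_rpow_le_tsum hq x
    _ = ∑' k : ℕ, (k : ℝ≥0∞) ^ q * μ (S k) := by
        rw [lintegral_tsum fun k => (measurable_const.indicator (hS k)).aemeasurable]
        simp_rw [lintegral_indicator_const (hS _)]

variable (hS : ∀ k, MeasurableSet (S k)) (hq : 0 < q)
    (hsum : ∑' k : ℕ, (k : ℝ≥0∞) ^ q * μ (S k) ≠ ∞)
include hS hq hsum

theorem memLp_toReal_natSupIndicator :
    MemLp (fun x => (natSupIndicator S x).toReal) (ENNReal.ofReal q) μ := by
  refine ⟨(measurable_natSupIndicator hS).ennreal_toReal.aestronglyMeasurable, ?_⟩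
  rw [eLpNorm_lt_top_iff_lintegral_rpow_enorm_lt_top (by simpa using hq) ENNReal.ofReal_ne_top,
    ENNReal.toReal_ofReal hq.le]
  calc ∫⁻ x, ‖(natSupIndicator S x).toReal‖ₑ ^ q ∂μ
      ≤ ∫⁻ x, natSupIndicator S x ^ q ∂μ := by
        gcongr with x
        rw [Real.enorm_of_nonneg ENNReal.toReal_nonneg]
        exact ENNReal.ofReal_toReal_le
    _ < ∞ := (lintegral_natSupIndicator_rpow_le hS hq).trans_lt hsum.lt_top

theorem ae_natSupIndicator_lt_top : ∀ᵐ x ∂μ, natSupIndicator S x < ∞ := by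
  filter_upwards [ae_lt_top ((measurable_natSupIndicator hS).pow_const q)
    ((lintegral_natSupIndicator_rpow_le hS hq).trans_lt hsum.lt_top).ne] with x hx
  exact (ENNReal.rpow_lt_top_iff_of_pos hq).1 hx

theorem indicator_le_toReal_natSupIndicator (k : ℕ) :
    (S k).indicator (fun _ => (k : ℝ)) ≤ᵐ[μ] fun x => (natSupIndicator S x).toReal := by
  filter_upwards [ae_natSupIndicator_lt_top hS hq hsum] with x hx
  by_cases hxk : x ∈ S k
  · rw [Set.indicator_of_mem hxk]
    exact (ENNReal.toReal_le_toReal (by simp) hx.ne).2 (le_natSupIndicator hxk)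
  · rw [Set.indicator_of_notMem hxk]
    exact ENNReal.toReal_nonneg

end NatSupIndicator

end MeasureTheory

section MemLpReal

variable {X : Type*} [MeasurableSpace X] {μ : Measure X} [IsFiniteMeasure μ] {p : ℝ}

theorem memLpReal_of_memLp {f : X → ℝ} (hp : 0 ≤ p) (hf : Measurable f)
    (hLp : MemLp f (ENNReal.ofReal p) μ) : MemLpReal μ p f := by
  refine ⟨hf, ?_⟩
  have h_enorm : ∀ x, ENNReal.ofReal (|f x| ^ p) = ‖f x‖ₑ ^ p := fun x => by
    rw [← ENNReal.ofReal_rpow_of_nonneg (abs_nonneg _) hp, Real.enorm_eq_ofReal_abs]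
  simp_rw [h_enorm]
  rcases hp.eq_or_lt with rfl | hp
  · simp
  · simpa [ENNReal.toReal_ofReal hp.le] using
      lintegral_rpow_enorm_lt_top_of_eLpNorm_lt_top (by simpa using hp) ENNReal.ofReal_ne_top
        hLp.eLpNorm_lt_top

theorem memLpReal_indicator_const (hp : 0 ≤ p) {s : Set X} (hs : MeasurableSet s) (c : ℝ) :
    MemLpReal μ p (s.indicator fun _ => c) :=
  memLpReal_of_memLp hp (measurable_const.indicator hs)
    (memLp_indicator_const _ hs c (Or.inr (measure_ne_top μ s)))

theorem exists_memLpReal_forall_indicator_le (hp : 0 ≤ p) {S : ℕ → Set X}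
    (hS : ∀ k, MeasurableSet (S k))
    (hS_le : ∀ k : ℕ, (k : ℝ≥0∞) ^ (p + 1) * μ (S k) ≤ 2⁻¹ ^ k) :
    ∃ f : X → ℝ, MemLpReal μ p f ∧ ∀ k : ℕ, (S k).indicator (fun _ => (k : ℝ)) ≤ᵐ[μ] f := by
  -- the exponent `p + 1 > 0` makes `natSupIndicator S` finite a.e. even when `p = 0`
  have hq : 0 < p + 1 := by linarith
  have hsum : ∑' k : ℕ, (k : ℝ≥0∞) ^ (p + 1) * μ (S k) ≠ ∞ :=
    ne_top_of_le_ne_top (by simp [ENNReal.tsum_geometric]) (ENNReal.tsum_le_tsum hS_le)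
  refine ⟨fun x => (natSupIndicator S x).toReal,
    memLpReal_of_memLp hp (measurable_natSupIndicator hS).ennreal_toReal
      ((memLp_toReal_natSupIndicator hS hq hsum).mono_exponent (by gcongr; linarith)),
    indicator_le_toReal_natSupIndicator hS hq hsum⟩

end MemLpReal

theorem stmt8 {X : Type*} [MeasurableSpace X] (μ : Measure X) [IsProbabilityMeasure μ]
    -- `μ` is diffuse (nonatomic): every set of nonzero measure has a subset of strictly
    -- smaller nonzero measure
    (hdiffuse : ∀ s : Set X, MeasurableSet s → μ s ≠ 0 →
      ∃ t ⊆ s, MeasurableSet t ∧ μ t ≠ 0 ∧ μ t < μ s)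
    (p : ℝ) (hp : 0 ≤ p) :
    ¬ ∃ φ : (X → ℝ) → (X → ℝ),
      (∀ f : X → ℝ, MemLpReal μ p f → MemLpReal μ p (φ f)) ∧
      (∀ f : X → ℝ, MemLpReal μ p f → φ f =ᵐ[μ] f) ∧
      (∀ f g : X → ℝ, MemLpReal μ p f → MemLpReal μ p g →
        f ≤ᵐ[μ] g → ∀ x, φ f x ≤ φ g x) := by
  rintro ⟨φ, -, hφ_ae, hφ_mono⟩
  choose T hT_meas hT_le hT_cover using fun k : ℕ =>
    Measure.IsDiffuse.exists_ae_cover_measure_le hdiffuse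
      (ε := 2⁻¹ ^ k / (k : ℝ≥0∞) ^ (p + 1)) (ENNReal.div_pos_iff.2 ⟨by simp, by finiteness⟩).ne'
  let h (k i : ℕ) : X → ℝ := (T k i).indicator fun _ => (k : ℝ)
  have h_mem (k i : ℕ) : MemLpReal μ p (h k i) := memLpReal_indicator_const hp (hT_meas k i) _
  obtain ⟨x₀, hx₀φ, hx₀T⟩ : ∃ x, (∀ k i, φ (h k i) x = h k i x) ∧ ∀ k, ∃ i, x ∈ T k i := by
    refine Eventually.exists (f := ae μ) ?_
    simp only [eventually_and, ae_all_iff]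
    exact ⟨fun k i => hφ_ae _ (h_mem k i), hT_cover⟩
  choose i hi using hx₀T
  obtain ⟨f, hf_mem, hf_ge⟩ := exists_memLpReal_forall_indicator_le hp
    (fun k => hT_meas k (i k)) fun k => le_trans (by gcongr; exact hT_le k (i k)) ENNReal.mul_div_le
  obtain ⟨k, hk⟩ := exists_nat_gt (φ f x₀)
  have h_le := hφ_mono _ _ (h_mem k (i k)) hf_mem (hf_ge k) x₀
  rw [hx₀φ] at h_le
  simp only [h, Set.indicator_of_mem (hi k)] at h_le
  linarith
end

section
/- Let $X$ and $Y$ be topological spaces and $h \colon X \times Y \to \mathbb{R}$ a separately continuous function. If $h = \sum_{i=1}^n f_i \otimes g_i$ for some functions $f_i \colon X \to \mathbb{R}$, $g_i \colon Y \to \mathbb{R}$, then there exist continuous functions $\bar{f}_i \in C(X)$, $\bar{g}_i \in C(Y)$, $i = 1, \dots, m$, with $h = \sum_{i=1}^m \bar{f}_i \otimes \bar{g}_i$. -/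
/-!
The vertical sections `h(x, ·)` span a finite-dimensional space `V` of continuous functions on `Y`.
Expanding `h(x, ·)` in a basis `G₁, …, Gₘ` of `V` gives `h(x, y) = ∑ Fⱼ(x) Gⱼ(y)`. Since the `Gⱼ`
are linearly independent, the vectors `(G₁(y), …, Gₘ(y))` span `𝕜ᵐ`, so each coordinate `Fⱼ` is a
linear combination of horizontal sections `h(·, y)`, hence continuous.
-/

open Set Submodule

section

variable {𝕜 X Y : Type*} [Field 𝕜] [TopologicalSpace 𝕜] [IsTopologicalRing 𝕜] [TopologicalSpace X]

theorem continuous_of_linearIndependent_of_continuous_sum_mul {ι : Type*} [Fintype ι]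
    {F : ι → X → 𝕜} {G : ι → Y → 𝕜} (hG : LinearIndependent 𝕜 G)
    (hFG : ∀ y, Continuous fun x => ∑ i, F i x * G i y) (i : ι) : Continuous (F i) := by
  classical
  -- `L u = fun x => ∑ j, F j x * u j`; the `u` making it continuous form a subspace containing
  -- every `(G j y)ⱼ`, and these span `ι → 𝕜`.
  let L : (ι → 𝕜) →ₗ[𝕜] X → 𝕜 := Matrix.mulVecLin (Matrix.of fun x j => F j x)
  have hspan : span 𝕜 (range (flip G)) ≤ (continuousSubmodule X 𝕜 𝕜).comap L :=
    span_le.2 <| by rintro _ ⟨y, rfl⟩; exact hFG y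
  rw [span_flip_eq_top_iff_linearIndependent.2 hG] at hspan
  have hi := hspan (mem_top (x := Pi.single i 1))
  simp only [mem_comap, L, Matrix.mulVecLin_apply, Matrix.mulVec_single_one] at hi
  exact hi

theorem exists_sum_mul_continuous_of_finiteDimensional [TopologicalSpace Y] (h : X → Y → 𝕜)
    (hvc : ∀ x, Continuous (h x)) (hhc : ∀ y, Continuous fun x => h x y)
    [FiniteDimensional 𝕜 (span 𝕜 (range h))] :
    ∃ (m : ℕ) (F : Fin m → X → 𝕜) (G : Fin m → Y → 𝕜),
      (∀ i, Continuous (F i)) ∧ (∀ i, Continuous (G i)) ∧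
      ∀ x y, h x y = ∑ i, F i x * G i y := by
  set V := span 𝕜 (range h)
  have hV : V ≤ continuousSubmodule Y 𝕜 𝕜 := span_le.2 <| by rintro _ ⟨x, rfl⟩; exact hvc x
  let b := Module.finBasis 𝕜 V
  let F j x := b.repr ⟨h x, subset_span ⟨x, rfl⟩⟩ j
  let G j : Y → 𝕜 := b j
  have hFG : ∀ x y, h x y = ∑ j, F j x * G j y := fun x y => by
    have := congr_arg (fun v : V => (v : Y → 𝕜) y) (b.sum_repr ⟨h x, subset_span ⟨x, rfl⟩⟩)
    simp only [coe_sum, coe_smul, Finset.sum_apply, Pi.smul_apply, smul_eq_mul] at this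
    exact this.symm
  have hG : LinearIndependent 𝕜 G := b.linearIndependent.map' V.subtype V.ker_subtype
  refine ⟨_, F, G, continuous_of_linearIndependent_of_continuous_sum_mul hG fun y => ?_,
    fun j => hV (b j).2, hFG⟩
  simpa only [← hFG] using hhc y

end

theorem stmt11 {X Y : Type*} [TopologicalSpace X] [TopologicalSpace Y]
    (h : X × Y → ℝ)
    (hvc : ∀ x : X, Continuous fun y => h (x, y))
    (hhc : ∀ y : Y, Continuous fun x => h (x, y))
    (n : ℕ) (f : Fin n → X → ℝ) (g : Fin n → Y → ℝ)
    (hsum : ∀ x y, h (x, y) = ∑ i, f i x * g i y) :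
    ∃ (m : ℕ) (F : Fin m → X → ℝ) (G : Fin m → Y → ℝ),
      (∀ i, Continuous (F i)) ∧ (∀ i, Continuous (G i)) ∧
      ∀ x y, h (x, y) = ∑ i, F i x * G i y := by
  have hle : span ℝ (range fun x y => h (x, y)) ≤ span ℝ (range g) := span_le.2 <| by
    rintro _ ⟨x, rfl⟩
    exact (mem_span_range_iff_exists_fun ℝ).2
      ⟨fun i => f i x, funext fun y => by simp [hsum]⟩
  have := FiniteDimensional.span_of_finite ℝ (finite_range g)
  have := Submodule.finiteDimensional_of_le hle
  exact exists_sum_mul_continuous_of_finiteDimensional _ hvc hhc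
end

section
/- Let $E \subseteq X \times Y$. Let $\mathcal{V} = \{E_x : x \in X\}$ and $\mathcal{H} = \{E^y : y \in Y\}$ be the families of vertical and horizontal sections. Then the following are equivalent: (a) $E$ is a finite union of rectangles $A_i \times B_i$ with each $A_i$ a finite intersection of members of $\mathcal{H}$ and each $B_i \in \mathcal{V}$; (b) $E$ is a finite union of arbitrary rectangles $A_i \times B_i$ with $A_i \subseteq X$, $B_i \subseteq Y$; (c) both $\mathcal{V}$ and $\mathcal{H}$ are finite. -/
theorem stmt12 {X Y : Type*} (E : Set (X × Y)) :
    -- (a) ↔ (b)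
    ((∃ (n : ℕ) (A : Fin n → Set X) (B : Fin n → Set Y),
        (∀ i, ∃ (m : ℕ) (H : Fin m → Set X),
          (∀ j, ∃ y : Y, H j = {x | (x, y) ∈ E}) ∧ A i = ⋂ j, H j) ∧
        (∀ i, ∃ x : X, B i = {y | (x, y) ∈ E}) ∧
        E = ⋃ i, A i ×ˢ B i) ↔
      (∃ (n : ℕ) (A : Fin n → Set X) (B : Fin n → Set Y), E = ⋃ i, A i ×ˢ B i)) ∧
    -- (b) ↔ (c)
    ((∃ (n : ℕ) (A : Fin n → Set X) (B : Fin n → Set Y), E = ⋃ i, A i ×ˢ B i) ↔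
      (Set.Finite {s : Set Y | ∃ x : X, s = {y | (x, y) ∈ E}} ∧
       Set.Finite {s : Set X | ∃ y : Y, s = {x | (x, y) ∈ E}})) := by
  have hbc : (∃ (n : ℕ) (A : Fin n → Set X) (B : Fin n → Set Y), E = ⋃ i, A i ×ˢ B i) →
      (Set.Finite {s : Set Y | ∃ x : X, s = {y | (x, y) ∈ E}} ∧
       Set.Finite {s : Set X | ∃ y : Y, s = {x | (x, y) ∈ E}}) := by
    rintro ⟨n, A, B, rfl⟩
    constructor
    · apply (Set.finite_range (fun S : Set (Fin n) => ⋃ i ∈ S, B i)).subset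
      rintro s ⟨x, rfl⟩
      refine ⟨{i | x ∈ A i}, ?_⟩
      ext y
      simp only [Set.mem_iUnion, Set.mem_setOf_eq, Set.mem_prod]
      tauto
    · apply (Set.finite_range (fun S : Set (Fin n) => ⋃ i ∈ S, A i)).subset
      rintro s ⟨y, rfl⟩
      refine ⟨{i | y ∈ B i}, ?_⟩
      ext x
      simp only [Set.mem_iUnion, Set.mem_setOf_eq, Set.mem_prod]
      tauto
  have hca : (Set.Finite {s : Set Y | ∃ x : X, s = {y | (x, y) ∈ E}} ∧
       Set.Finite {s : Set X | ∃ y : Y, s = {x | (x, y) ∈ E}}) →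
      (∃ (n : ℕ) (A : Fin n → Set X) (B : Fin n → Set Y),
        (∀ i, ∃ (m : ℕ) (H : Fin m → Set X),
          (∀ j, ∃ y : Y, H j = {x | (x, y) ∈ E}) ∧ A i = ⋂ j, H j) ∧
        (∀ i, ∃ x : X, B i = {y | (x, y) ∈ E}) ∧
        E = ⋃ i, A i ×ˢ B i) := by
    rintro ⟨hV, hH⟩
    obtain ⟨n, f, hf⟩ := hV.fin_embedding
    have hfV : ∀ i, ∃ x : X, (f i : Set Y) = {y | (x, y) ∈ E} := by
      intro i
      have : (f i : Set Y) ∈ {s : Set Y | ∃ x : X, s = {y | (x, y) ∈ E}} := by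
        rw [← hf]; exact Set.mem_range_self i
      exact this
    choose x hx using hfV
    have hTfin : ∀ i : Fin n, Set.Finite
        {s : Set X | ∃ y ∈ (f i : Set Y), s = {x | (x, y) ∈ E}} := by
      intro i
      apply hH.subset
      rintro s ⟨y, -, rfl⟩
      exact ⟨y, rfl⟩
    choose m g hg using fun i => (hTfin i).fin_embedding
    refine ⟨n, fun i => ⋂ j, (g i j : Set X), fun i => (f i : Set Y), ?_, ?_, ?_⟩
    · intro i
      refine ⟨m i, fun j => (g i j : Set X), ?_, rfl⟩
      intro j
      have : (g i j : Set X) ∈ {s : Set X | ∃ y ∈ (f i : Set Y), s = {x | (x, y) ∈ E}} := by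
        rw [← hg i]; exact Set.mem_range_self j
      obtain ⟨y, -, hy⟩ := this
      exact ⟨y, hy⟩
    · exact fun i => ⟨x i, hx i⟩
    · ext ⟨a, b⟩
      constructor
      · intro hab
        have : {y | (a, y) ∈ E} ∈ Set.range (⇑f) := by
          rw [hf]; exact ⟨a, rfl⟩
        obtain ⟨i, hi⟩ := this
        refine Set.mem_iUnion.2 ⟨i, ?_, ?_⟩
        · refine Set.mem_iInter.2 fun j => ?_
          have : (g i j : Set X) ∈ {s : Set X | ∃ y ∈ (f i : Set Y), s = {x | (x, y) ∈ E}} := by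
            rw [← hg i]; exact Set.mem_range_self j
          obtain ⟨y, hyf, hy⟩ := this
          rw [hy]
          have : y ∈ {y | (a, y) ∈ E} := by
            rw [← show (f i : Set Y) = {y | (a, y) ∈ E} from hi]; exact hyf
          exact this
        · show b ∈ (f i : Set Y)
          rw [show (f i : Set Y) = {y | (a, y) ∈ E} from hi]; exact hab
      · intro hmem
        obtain ⟨i, ha, hb⟩ := Set.mem_iUnion.1 hmem
        have : {x | (x, b) ∈ E} ∈ Set.range (⇑(g i)) := by
          rw [hg i]; exact ⟨b, hb, rfl⟩
        obtain ⟨j, hj⟩ := this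
        have h2 := Set.mem_iInter.1 ha j
        rw [show (g i j : Set X) = {x | (x, b) ∈ E} from hj] at h2
        exact h2
  refine ⟨⟨?_, ?_⟩, ?_, fun hc => (hca hc).imp fun n h => h.imp fun A h =>
    h.imp fun B h => h.2.2⟩
  · rintro ⟨n, A, B, -, -, hE⟩; exact ⟨n, A, B, hE⟩
  · intro hb; exact hca (hbc hb)
  · exact hbc
end

section
/- Let $X$ and $Y$ be topological spaces and $U \subseteq X \times Y$ a set all of whose vertical sections $U_x$ and horizontal sections $U^y$ are open. If $U$ is a finite union of arbitrary rectangles $A_i \times B_i$, then $U$ is a finite union of open rectangles $A'_i \times B'_i$ with $A'_i$ open in $X$ and $B'_i$ open in $Y$ (and in particular $U$ is open in the product topology). -/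
open Set

theorem stmt13 {X Y : Type*} [TopologicalSpace X] [TopologicalSpace Y]
    (U : Set (X × Y))
    (hv : ∀ x : X, IsOpen {y | (x, y) ∈ U})
    (hh : ∀ y : Y, IsOpen {x | (x, y) ∈ U})
    (n : ℕ) (A : Fin n → Set X) (B : Fin n → Set Y)
    (hU : U = ⋃ i, A i ×ˢ B i) :
    (∃ (m : ℕ) (A' : Fin m → Set X) (B' : Fin m → Set Y),
      (∀ i, IsOpen (A' i)) ∧ (∀ i, IsOpen (B' i)) ∧ U = ⋃ i, A' i ×ˢ B' i) ∧
    IsOpen U := by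
  classical
  -- key section identities
  have keyY : ∀ x : X, {y | (x, y) ∈ U} =
      ⋃ i ∈ Finset.univ.filter (fun i => x ∈ A i), B i := by
    intro x; ext y; simp [hU, and_comm]
  have keyX : ∀ y : Y, {x | (x, y) ∈ U} =
      ⋃ i ∈ Finset.univ.filter (fun i => y ∈ B i), A i := by
    intro y; ext x; simp [hU, and_comm]
  set F : Finset (Fin n) → Set X := fun S => {x | ∀ y ∈ ⋃ i ∈ S, B i, (x, y) ∈ U} with hF
  set G : Finset (Fin n) → Set Y := fun S => {y | ∀ x ∈ F S, (x, y) ∈ U} with hG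
  set F' : Finset (Fin n) → Set X := fun S => {x | ∀ y ∈ G S, (x, y) ∈ U} with hF'
  have hGopen : ∀ S, IsOpen (G S) := by
    intro S
    have hGeq : G S = ⋂ (T : Finset (Fin n))
        (_ : ∃ x ∈ F S, Finset.univ.filter (fun i => x ∈ A i) = T), ⋃ i ∈ T, B i := by
      ext y
      simp only [hG, mem_setOf_eq, mem_iInter]
      constructor
      · rintro h T ⟨x, hx, rfl⟩
        rw [← keyY x]
        exact h x hx
      · intro h x hx
        have h2 := h _ ⟨x, hx, rfl⟩
        rwa [← keyY x] at h2
    rw [hGeq]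
    refine isOpen_iInter_of_finite fun T => ?_
    by_cases hT : ∃ x ∈ F S, Finset.univ.filter (fun i => x ∈ A i) = T
    · obtain ⟨x, hx, hxT⟩ := hT
      have : (⋃ i ∈ T, B i) = {y | (x, y) ∈ U} := by rw [keyY x, hxT]
      rw [iInter_eq_if, if_pos ⟨x, hx, hxT⟩, this]
      exact hv x
    · rw [iInter_eq_if, if_neg hT]
      exact isOpen_univ
  have hF'open : ∀ S, IsOpen (F' S) := by
    intro S
    have hFeq : F' S = ⋂ (T : Finset (Fin n))
        (_ : ∃ y ∈ G S, Finset.univ.filter (fun i => y ∈ B i) = T), ⋃ i ∈ T, A i := by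
      ext x
      simp only [hF', mem_setOf_eq, mem_iInter]
      constructor
      · rintro h T ⟨y, hy, rfl⟩
        rw [← keyX y]
        exact h y hy
      · intro h y hy
        have h2 := h _ ⟨y, hy, rfl⟩
        rwa [← keyX y] at h2
    rw [hFeq]
    refine isOpen_iInter_of_finite fun T => ?_
    by_cases hT : ∃ y ∈ G S, Finset.univ.filter (fun i => y ∈ B i) = T
    · obtain ⟨y, hy, hyT⟩ := hT
      have : (⋃ i ∈ T, A i) = {x | (x, y) ∈ U} := by rw [keyX y, hyT]
      rw [iInter_eq_if, if_pos ⟨y, hy, hyT⟩, this]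
      exact hh y
    · rw [iInter_eq_if, if_neg hT]
      exact isOpen_univ
  have hcover : U = ⋃ S : Finset (Fin n), F' S ×ˢ G S := by
    ext ⟨x, y⟩
    simp only [mem_iUnion, mem_prod]
    constructor
    · intro hxy
      refine ⟨Finset.univ.filter (fun i => x ∈ A i), ?_, ?_⟩
      · intro y' hy'
        have hxF : x ∈ F (Finset.univ.filter (fun i => x ∈ A i)) := by
          intro y'' hy''
          rwa [← keyY x] at hy''
        exact hy' x hxF
      · intro x' hx'
        apply hx'
        rw [← keyY x]
        exact hxy
    · rintro ⟨S, hx, hy⟩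
      exact hx y hy
  have main : ∃ (m : ℕ) (A' : Fin m → Set X) (B' : Fin m → Set Y),
      (∀ i, IsOpen (A' i)) ∧ (∀ i, IsOpen (B' i)) ∧ U = ⋃ i, A' i ×ˢ B' i := by
    obtain ⟨e⟩ : Nonempty (Finset (Fin n) ≃ Fin (Fintype.card (Finset (Fin n)))) :=
      ⟨Fintype.equivFin _⟩
    refine ⟨_, fun i => F' (e.symm i), fun i => G (e.symm i),
      fun i => hF'open _, fun i => hGopen _, ?_⟩
    rw [hcover]
    exact (Function.Surjective.iUnion_comp e.symm.surjective fun S => F' S ×ˢ G S).symm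
  refine ⟨main, ?_⟩
  rw [hcover]
  exact isOpen_iUnion fun S => (hF'open S).prod (hGopen S)
end

section
/- Let $(X, \Sigma, \mu)$, $(Y, T, \nu)$, $(X \times Y, \Upsilon, \upsilon)$ be probability spaces satisfying: $\Sigma \otimes T \subseteq \Upsilon$; the Fubini property $[C]$ (for each $E \in \Upsilon$ there is $N \in \Sigma$ with $\mu(N)=0$ such that $E_x \in T$ for $x \notin N$, $x \mapsto \nu(E_x)$ is $\Sigma$-measurable on $N^c$, and $\upsilon(E) = \int_{N^c} \nu(E_x)\,d\mu$); and the symmetric property $[\overline{C}]$ with the roles of the factors interchanged. Let $h = f \otimes g$ with $f \colon X \to \mathbb{R}$, $g \colon Y \to \mathbb{R}$. If $h \in \mathcal{L}^p(\upsilon)$, then either $f = 0$ off a $\mu$-null set, or $g = 0$ off a $\nu$-null set, or both $f \in \mathcal{L}^p(\mu)$ and $g \in \mathcal{L}^p(\nu)$. -/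
/-
If a rectangle `A ×ˢ B` lies in a measurable set `E`, either section formula gives
`μ A * ν B ≤ υ E`. For `f` not a.e. zero and `g` not a.e. zero, pick `ε > 0` with
`ν {ε ≤ |g|} > 0`; the rectangles `{t < |ε f|} ×ˢ {ε ≤ |g|} ⊆ {t < |f ⊗ g|}` bound the
distribution function of `ε f` by a constant multiple of that of `f ⊗ g`, so the layer-cake
formula (or, for `p = ∞`, an essential bound) transfers finiteness of the `p`-norm. Measurability
of `f` comes from `[C̄]`: off a `ν`-null set every section `x ↦ f x * g y` is measurable (test
the countably many sets `{q < f ⊗ g}`, `q ∈ ℚ`), and one of these sections has `g y ≠ 0`.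
-/

open MeasureTheory
open scoped ENNReal

/-- The Fubini property `[C]` for a triple of (probability) spaces:
for each `Υ`-measurable `E` there is a `μ`-null `N ∈ Σ` such that all vertical sections over
`Nᶜ` are measurable, `x ↦ ν (E_x)` is `Σ`-measurable on `Nᶜ`, and
`υ E = ∫_{Nᶜ} ν (E_x) dμ`. -/
def PropC {X Y : Type*} [MeasurableSpace X] [MeasurableSpace Y]
    (mXY : MeasurableSpace (X × Y)) (μ : Measure X) (ν : Measure Y)
    (υ : @Measure (X × Y) mXY) : Prop :=
  ∀ E : Set (X × Y), MeasurableSet[mXY] E →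
    ∃ N : Set X, MeasurableSet N ∧ μ N = 0 ∧
      (∀ x ∉ N, MeasurableSet {y | (x, y) ∈ E}) ∧
      (∀ t : Set ℝ≥0∞, MeasurableSet t →
        MeasurableSet (Nᶜ ∩ {x | ν {y | (x, y) ∈ E} ∈ t})) ∧
      υ E = ∫⁻ x in Nᶜ, ν {y | (x, y) ∈ E} ∂μ

/-- The symmetric Fubini property `[C̄]`, with the roles of the factors interchanged. -/
def PropCbar {X Y : Type*} [MeasurableSpace X] [MeasurableSpace Y]
    (mXY : MeasurableSpace (X × Y)) (μ : Measure X) (ν : Measure Y)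
    (υ : @Measure (X × Y) mXY) : Prop :=
  ∀ E : Set (X × Y), MeasurableSet[mXY] E →
    ∃ M : Set Y, MeasurableSet M ∧ ν M = 0 ∧
      (∀ y ∉ M, MeasurableSet {x | (x, y) ∈ E}) ∧
      (∀ t : Set ℝ≥0∞, MeasurableSet t →
        MeasurableSet (Mᶜ ∩ {y | μ {x | (x, y) ∈ E} ∈ t})) ∧
      υ E = ∫⁻ y in Mᶜ, μ {x | (x, y) ∈ E} ∂ν

open Set

section General

variable {α : Type*} [MeasurableSpace α] {μ : Measure α}

theorem measurable_of_measurableSet_preimage_Ioi_rat {f : α → ℝ}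
    (hf : ∀ q : ℚ, MeasurableSet (f ⁻¹' Ioi (q : ℝ))) : Measurable f := by
  rw [show Real.measurableSpace = _ from Real.borel_eq_generateFrom_Ioi_rat]
  refine measurable_generateFrom ?_
  simp only [mem_iUnion, mem_singleton_iff]
  rintro _ ⟨q, rfl⟩
  exact hf q

theorem exists_measurableSet_null_of_ae {P : α → Prop} (h : ∀ᵐ x ∂μ, P x) :
    ∃ N : Set α, MeasurableSet N ∧ μ N = 0 ∧ ∀ x ∉ N, P x := by
  obtain ⟨N, hsub, hN, hN0⟩ := exists_measurable_superset_of_null (ae_iff.mp h)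
  exact ⟨N, hN, hN0, fun x hx => not_not.mp fun hPx => hx (hsub hPx)⟩

theorem exists_notMem_of_not_ae {P : α → Prop} (h : ¬ ∀ᵐ x ∂μ, P x)
    {N : Set α} (hN : μ N = 0) : ∃ x ∉ N, ¬ P x := by
  by_contra! hP
  exact h (measure_mono_null (fun x hx => not_not.mp fun hxN => hx (hP x hxN)) hN)

theorem exists_pos_measure_le_abs {g : α → ℝ} (hg : ¬ ∀ᵐ x ∂μ, g x = 0) :
    ∃ ε : ℝ, 0 < ε ∧ 0 < μ {x | ε ≤ |g x|} := by
  by_contra! hcon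
  have hnull : μ (⋃ n : ℕ, {x | 1 / ((n : ℝ) + 1) ≤ |g x|}) = 0 :=
    measure_iUnion_null fun n => nonpos_iff_eq_zero.mp (hcon _ (by positivity))
  refine hg (ae_iff.mpr (measure_mono_null (fun x hx => ?_) hnull))
  obtain ⟨n, hn⟩ := exists_nat_one_div_lt (abs_pos.mpr hx)
  exact mem_iUnion.mpr ⟨n, hn.le⟩

end General

section Distribution

variable {α Z E F : Type*} [MeasurableSpace α] [MeasurableSpace Z]
  [NormedAddCommGroup E] [NormedAddCommGroup F] {μ : Measure α} {κ : Measure Z}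
  {f : α → E} {h : Z → F} {c : ℝ≥0∞}

theorem lintegral_enorm_rpow_eq_lintegral_meas_lt_mul (hf : AEStronglyMeasurable f μ) {q : ℝ}
    (hq : 0 < q) :
    ∫⁻ x, ‖f x‖ₑ ^ q ∂μ =
      ENNReal.ofReal q *
        ∫⁻ t in Ioi 0, μ {x | t < ‖f x‖} * ENNReal.ofReal (t ^ (q - 1)) := by
  simp_rw [← ofReal_norm, ENNReal.ofReal_rpow_of_nonneg (norm_nonneg _) hq.le]
  exact lintegral_rpow_eq_lintegral_meas_lt_mul μ (ae_of_all _ fun x => norm_nonneg _)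
    hf.norm.aemeasurable hq

theorem mul_lintegral_enorm_rpow_le_of_mul_meas_lt_le (hf : AEStronglyMeasurable f μ)
    (hh : AEStronglyMeasurable h κ)
    (hdist : ∀ t : ℝ, 0 < t → c * μ {x | t < ‖f x‖} ≤ κ {z | t < ‖h z‖})
    {q : ℝ} (hq : 0 < q) :
    c * ∫⁻ x, ‖f x‖ₑ ^ q ∂μ ≤ ∫⁻ z, ‖h z‖ₑ ^ q ∂κ := by
  rw [lintegral_enorm_rpow_eq_lintegral_meas_lt_mul hf hq,
    lintegral_enorm_rpow_eq_lintegral_meas_lt_mul hh hq, mul_left_comm]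
  gcongr
  calc c * ∫⁻ t in Ioi 0, μ {x | t < ‖f x‖} * ENNReal.ofReal (t ^ (q - 1))
      ≤ ∫⁻ t in Ioi 0, c * (μ {x | t < ‖f x‖} * ENNReal.ofReal (t ^ (q - 1))) :=
        lintegral_const_mul_le _ _
    _ ≤ ∫⁻ t in Ioi 0, κ {z | t < ‖h z‖} * ENNReal.ofReal (t ^ (q - 1)) := by
        refine setLIntegral_mono' measurableSet_Ioi fun t ht => ?_
        rw [← mul_assoc]
        gcongr
        exact hdist t ht

theorem eLpNorm_lt_top_of_mul_meas_lt_le (hf : AEStronglyMeasurable f μ)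
    (hh : AEStronglyMeasurable h κ) (hc : c ≠ 0)
    (hdist : ∀ t : ℝ, 0 < t → c * μ {x | t < ‖f x‖} ≤ κ {z | t < ‖h z‖})
    {p : ℝ≥0∞} (hLp : eLpNorm h p κ < ⊤) : eLpNorm f p μ < ⊤ := by
  rcases eq_or_ne p 0 with rfl | hp0
  · simp
  rcases eq_or_ne p ∞ with rfl | hp
  · rw [eLpNorm_exponent_top] at hLp ⊢
    set T := (eLpNormEssSup h κ).toReal + 1
    have hT : 0 < T := by positivity
    have hh_null : κ {z | T < ‖h z‖} = 0 := by
      refine measure_mono_null (fun z hz => ?_) (meas_eLpNormEssSup_lt (f := h))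
      rw [mem_ofPred_eq, ← ofReal_norm, ← ENNReal.ofReal_toReal hLp.ne]
      exact (ENNReal.ofReal_lt_ofReal_iff (hT.trans hz)).mpr ((lt_add_one _).trans hz)
    have hf_null : μ {x | T < ‖f x‖} = 0 :=
      (mul_eq_zero.mp (nonpos_iff_eq_zero.mp (hh_null ▸ hdist T hT))).resolve_left hc
    exact eLpNormEssSup_lt_top_of_ae_bound (ae_iff.mpr (by simpa only [not_le] using hf_null))
  rw [eLpNorm_lt_top_iff_lintegral_rpow_enorm_lt_top hp0 hp] at hLp ⊢
  refine ENNReal.lt_top_of_mul_ne_top_right ?_ hc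
  exact ((mul_lintegral_enorm_rpow_le_of_mul_meas_lt_le hf hh hdist
    (ENNReal.toReal_pos hp0 hp)).trans_lt hLp).ne

end Distribution

section Fubini

variable {X Y : Type*} [MeasurableSpace X] [MeasurableSpace Y] {mXY : MeasurableSpace (X × Y)}
  {μ : Measure X} {ν : Measure Y} {υ : @Measure (X × Y) mXY} {f : X → ℝ} {g : Y → ℝ}

theorem PropC.mul_measure_le_of_prod_subset (hC : PropC mXY μ ν υ) {E : Set (X × Y)}
    (hE : MeasurableSet[mXY] E) {A : Set X} (hA : MeasurableSet A) {B : Set Y}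
    (hAB : A ×ˢ B ⊆ E) : ν B * μ A ≤ υ E := by
  obtain ⟨N, -, hN0, -, -, hυE⟩ := hC E hE
  rw [hυE, Measure.restrict_eq_self_of_ae_mem (s := Nᶜ) (compl_mem_ae_iff.mpr hN0),
    ← lintegral_indicator_const hA]
  refine lintegral_mono fun x => ?_
  by_cases hx : x ∈ A
  · rw [indicator_of_mem hx]
    exact measure_mono fun y hy => hAB ⟨hx, hy⟩
  · rw [indicator_of_notMem hx]
    exact zero_le

theorem PropCbar.mul_measure_le_of_prod_subset (hC : PropCbar mXY μ ν υ) {E : Set (X × Y)}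
    (hE : MeasurableSet[mXY] E) {A : Set X} {B : Set Y} (hB : MeasurableSet B)
    (hAB : A ×ˢ B ⊆ E) : μ A * ν B ≤ υ E := by
  obtain ⟨M, -, hM0, -, -, hυE⟩ := hC E hE
  rw [hυE, Measure.restrict_eq_self_of_ae_mem (s := Mᶜ) (compl_mem_ae_iff.mpr hM0),
    ← lintegral_indicator_const hB]
  refine lintegral_mono fun y => ?_
  by_cases hy : y ∈ B
  · rw [indicator_of_mem hy]
    exact measure_mono fun x hx => hAB ⟨hx, hy⟩
  · rw [indicator_of_notMem hy]
    exact zero_le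

theorem PropC.measurable_right (hC : PropC mXY μ ν υ)
    (hmeas : Measurable[mXY] fun z : X × Y => f z.1 * g z.2) (hf0 : ¬ ∀ᵐ x ∂μ, f x = 0) :
    Measurable g := by
  choose N _ hN0 hNsec _ _ using fun q : ℚ => hC _ (hmeas (measurableSet_Ioi (a := (q : ℝ))))
  obtain ⟨x₀, hx₀, hfx₀⟩ := exists_notMem_of_not_ae hf0 (measure_iUnion_null hN0)
  refine (measurable_const_smul_iff₀ hfx₀).mp (measurable_of_measurableSet_preimage_Ioi_rat ?_)
  exact fun q => hNsec q x₀ fun hq => hx₀ (mem_iUnion.mpr ⟨q, hq⟩)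

theorem PropCbar.measurable_left (hC : PropCbar mXY μ ν υ)
    (hmeas : Measurable[mXY] fun z : X × Y => f z.1 * g z.2) (hg0 : ¬ ∀ᵐ y ∂ν, g y = 0) :
    Measurable f := by
  choose M _ hM0 hMsec _ _ using fun q : ℚ => hC _ (hmeas (measurableSet_Ioi (a := (q : ℝ))))
  obtain ⟨y₀, hy₀, hgy₀⟩ := exists_notMem_of_not_ae hg0 (measure_iUnion_null hM0)
  refine (measurable_const_smul_iff₀ hgy₀).mp (measurable_of_measurableSet_preimage_Ioi_rat ?_)
  simp only [smul_eq_mul, mul_comm (g y₀)]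
  exact fun q => hMsec q y₀ fun hq => hy₀ (mem_iUnion.mpr ⟨q, hq⟩)

theorem PropC.eLpNorm_left_lt_top (hC : PropC mXY μ ν υ)
    (hmeas : Measurable[mXY] fun z : X × Y => f z.1 * g z.2) (hf : Measurable f)
    (hg0 : ¬ ∀ᵐ y ∂ν, g y = 0) {p : ℝ≥0∞}
    (hLp : eLpNorm (fun z : X × Y => f z.1 * g z.2) p υ < ⊤) : eLpNorm f p μ < ⊤ := by
  obtain ⟨ε, hε, hgε⟩ := exists_pos_measure_le_abs hg0
  have hdist (t : ℝ) : ν {y | ε ≤ |g y|} * μ {x | t < ‖(ε • f) x‖} ≤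
      υ {z | t < ‖f z.1 * g z.2‖} := by
    refine hC.mul_measure_le_of_prod_subset (hmeas.norm measurableSet_Ioi)
      ((hf.const_smul ε).norm measurableSet_Ioi) ?_
    rintro ⟨x, y⟩ ⟨hx, hy⟩
    simp only [mem_ofPred_eq, mem_preimage, mem_Ioi, Pi.smul_apply, smul_eq_mul,
      Real.norm_eq_abs, abs_mul, abs_of_pos hε] at hx hy ⊢
    nlinarith [abs_nonneg (f x)]
  have hεf := eLpNorm_lt_top_of_mul_meas_lt_le (hf.const_smul ε).aestronglyMeasurable
    hmeas.aestronglyMeasurable hgε.ne' (fun t _ => hdist t) hLp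
  rw [eLpNorm_const_smul] at hεf
  exact ENNReal.lt_top_of_mul_ne_top_right hεf.ne (by simpa using hε.ne')

theorem PropCbar.eLpNorm_right_lt_top (hC : PropCbar mXY μ ν υ)
    (hmeas : Measurable[mXY] fun z : X × Y => f z.1 * g z.2) (hg : Measurable g)
    (hf0 : ¬ ∀ᵐ x ∂μ, f x = 0) {p : ℝ≥0∞}
    (hLp : eLpNorm (fun z : X × Y => f z.1 * g z.2) p υ < ⊤) : eLpNorm g p ν < ⊤ := by
  obtain ⟨ε, hε, hfε⟩ := exists_pos_measure_le_abs hf0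
  have hdist (t : ℝ) : μ {x | ε ≤ |f x|} * ν {y | t < ‖(ε • g) y‖} ≤
      υ {z | t < ‖f z.1 * g z.2‖} := by
    refine hC.mul_measure_le_of_prod_subset (hmeas.norm measurableSet_Ioi)
      ((hg.const_smul ε).norm measurableSet_Ioi) ?_
    rintro ⟨x, y⟩ ⟨hx, hy⟩
    simp only [mem_ofPred_eq, mem_preimage, mem_Ioi, Pi.smul_apply, smul_eq_mul,
      Real.norm_eq_abs, abs_mul, abs_of_pos hε] at hx hy ⊢
    nlinarith [abs_nonneg (g y)]
  have hεg := eLpNorm_lt_top_of_mul_meas_lt_le (hg.const_smul ε).aestronglyMeasurable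
    hmeas.aestronglyMeasurable hfε.ne' (fun t _ => hdist t) hLp
  rw [eLpNorm_const_smul] at hεg
  exact ENNReal.lt_top_of_mul_ne_top_right hεg.ne (by simpa using hε.ne')

end Fubini

theorem stmt15_general {X Y : Type*} [mX : MeasurableSpace X] [mY : MeasurableSpace Y]
    (mXY : MeasurableSpace (X × Y))
    (μ : Measure X) (ν : Measure Y) (υ : @Measure (X × Y) mXY)
    (hC : PropC mXY μ ν υ) (hCbar : PropCbar mXY μ ν υ)
    (p : ℝ≥0∞) (f : X → ℝ) (g : Y → ℝ)
    (hmeas : Measurable[mXY] fun z : X × Y => f z.1 * g z.2)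
    (hLp : eLpNorm (fun z : X × Y => f z.1 * g z.2) p υ < ⊤) :
    (∃ N : Set X, MeasurableSet N ∧ μ N = 0 ∧ ∀ x ∉ N, f x = 0) ∨
    (∃ M : Set Y, MeasurableSet M ∧ ν M = 0 ∧ ∀ y ∉ M, g y = 0) ∨
    ((Measurable f ∧ eLpNorm f p μ < ⊤) ∧ (Measurable g ∧ eLpNorm g p ν < ⊤)) := by
  by_cases hf0 : ∀ᵐ x ∂μ, f x = 0
  · exact Or.inl (exists_measurableSet_null_of_ae hf0)
  by_cases hg0 : ∀ᵐ y ∂ν, g y = 0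
  · exact Or.inr (Or.inl (exists_measurableSet_null_of_ae hg0))
  have hf : Measurable f := hCbar.measurable_left hmeas hg0
  have hg : Measurable g := hC.measurable_right hmeas hf0
  exact Or.inr (Or.inr ⟨⟨hf, hC.eLpNorm_left_lt_top hmeas hf hg0 hLp⟩,
    ⟨hg, hCbar.eLpNorm_right_lt_top hmeas hg hf0 hLp⟩⟩)

theorem stmt15 {X Y : Type*} [mX : MeasurableSpace X] [mY : MeasurableSpace Y]
    (mXY : MeasurableSpace (X × Y))
    (μ : Measure X) (ν : Measure Y) (υ : @Measure (X × Y) mXY)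
    [IsProbabilityMeasure μ] [IsProbabilityMeasure ν]
    (hυprob : @IsProbabilityMeasure _ mXY υ)
    (hsub : mX.prod mY ≤ mXY)
    (hC : PropC mXY μ ν υ) (hCbar : PropCbar mXY μ ν υ)
    (p : ℝ≥0∞) (f : X → ℝ) (g : Y → ℝ)
    (hmeas : Measurable[mXY] fun z : X × Y => f z.1 * g z.2)
    (hLp : eLpNorm (fun z : X × Y => f z.1 * g z.2) p υ < ⊤) :
    (∃ N : Set X, MeasurableSet N ∧ μ N = 0 ∧ ∀ x ∉ N, f x = 0) ∨
    (∃ M : Set Y, MeasurableSet M ∧ ν M = 0 ∧ ∀ y ∉ M, g y = 0) ∨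
    ((Measurable f ∧ eLpNorm f p μ < ⊤) ∧ (Measurable g ∧ eLpNorm g p ν < ⊤)) :=
  stmt15_general (mX := mX) (mY := mY) mXY μ ν υ hC hCbar p f g hmeas hLp
end

section
/- Let $(X, \Sigma, \mu)$, $(Y, T, \nu)$, $(X \times Y, \Upsilon, \upsilon)$ be probability spaces with a topology $\mathfrak{S} \subseteq \Sigma$ on $X$ and $\mathfrak{T} \subseteq T$ on $Y$, satisfying $[C]$ (the Fubini property: for each $E \in \Upsilon$ there is a $\mu$-null $N \in \Sigma$ such that $E_x \in T$ for $x \notin N$, $x \mapsto \nu(E_x)$ is measurable on $N^c$, and $\upsilon(E) = \int_{N^c} \nu(E_x)\,d\mu$). If the only continuous $\mu$-null function on $X$ is $0$, and the only continuous $\nu$-null function on $Y$ is $0$, then the only function on $X \times Y$ that is continuous for the product topology and $\upsilon$-null is $0$. -/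
open MeasureTheory
open scoped ENNReal

/-
Let `h` be continuous and `υ`-null. By `[C]`, `∫ ν{h(x, ·) ≠ 0} dμ(x) = υ{h ≠ 0} = 0`, so for
`μ`-almost every `x` the continuous section `h(x, ·)` is `ν`-null, hence identically zero. Thus
for every `y` the continuous section `h(·, y)` vanishes `μ`-almost everywhere, hence is zero.
-/

lemma measurable_indicator_of_measurableSet_inter_preimage {α β : Type*} [MeasurableSpace α]
    [MeasurableSpace β] [Zero β] {s : Set α} {f : α → β} (hs : MeasurableSet s)
    (hf : ∀ t, MeasurableSet t → MeasurableSet (s ∩ f ⁻¹' t)) :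
    Measurable (s.indicator f) := fun t ht => by
  rw [Set.indicator_preimage, Set.ite, Set.inter_comm]
  exact (hf t ht).union ((measurable_zero ht).diff hs)

lemma ae_eq_zero_of_setLIntegral_compl_eq_zero {α : Type*} [MeasurableSpace α] {μ : Measure α}
    {N : Set α} {F : α → ℝ≥0∞} (hNmeas : MeasurableSet N) (hN : μ N = 0)
    (hF : ∀ t, MeasurableSet t → MeasurableSet (Nᶜ ∩ F ⁻¹' t))
    (hint : ∫⁻ x in Nᶜ, F x ∂μ = 0) : F =ᵐ[μ] 0 := by
  have hF_ae : F =ᵐ[μ] Nᶜ.indicator F := by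
    filter_upwards [measure_eq_zero_iff_ae_notMem.mp hN] with x hx
    rw [Set.indicator_of_mem (Set.mem_compl hx)]
  have hmeas := measurable_indicator_of_measurableSet_inter_preimage hNmeas.compl hF
  rw [← lintegral_indicator hNmeas.compl, lintegral_eq_zero_iff hmeas] at hint
  exact hF_ae.trans hint

lemma PropC.ae_measure_section_eq_zero {X Y : Type*} [MeasurableSpace X] [MeasurableSpace Y]
    {mXY : MeasurableSpace (X × Y)} {μ : Measure X} {ν : Measure Y} {υ : @Measure (X × Y) mXY}
    (hC : PropC mXY μ ν υ) {E : Set (X × Y)} (hE : MeasurableSet[mXY] E) (hυE : υ E = 0) :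
    ∀ᵐ x ∂μ, ν {y | (x, y) ∈ E} = 0 := by
  obtain ⟨N, hNmeas, hN, -, hF, hint⟩ := hC E hE
  exact ae_eq_zero_of_setLIntegral_compl_eq_zero hNmeas hN hF (hint ▸ hυE)

theorem stmt16_general {X Y : Type*} [TopologicalSpace X] [TopologicalSpace Y]
    [mX : MeasurableSpace X] [mY : MeasurableSpace Y]
    (mXY : MeasurableSpace (X × Y))
    (μ : Measure X) (ν : Measure Y) (υ : @Measure (X × Y) mXY)
    -- the topologies consist of measurable sets
    (hSX : ∀ s : Set X, IsOpen s → MeasurableSet s)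
    (hSY : ∀ s : Set Y, IsOpen s → MeasurableSet s)
    (hC : PropC mXY μ ν υ)
    -- the only continuous `μ`-null function on `X` is `0`
    (hNX : ∀ f : X → ℝ, Continuous f → Measurable f → μ {x | f x ≠ 0} = 0 → f = 0)
    -- the only continuous `ν`-null function on `Y` is `0`
    (hNY : ∀ g : Y → ℝ, Continuous g → Measurable g → ν {y | g y ≠ 0} = 0 → g = 0) :
    -- then the only continuous `υ`-null function on `X × Y` is `0`
    ∀ h : X × Y → ℝ, Continuous h → Measurable[mXY] h → υ {z | h z ≠ 0} = 0 → h = 0 := by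
  intro h hc hm hnull
  have := opensMeasurableSpace_iff_forall_measurableSet.mpr hSX
  have := opensMeasurableSpace_iff_forall_measurableSet.mpr hSY
  have hE : MeasurableSet[mXY] {z | h z ≠ 0} := hm (measurableSet_singleton 0).compl
  have hsections : ∀ᵐ x ∂μ, ∀ y, h (x, y) = 0 := by
    filter_upwards [hC.ae_measure_section_eq_zero hE hnull] with x hx
    have hcx : Continuous fun y => h (x, y) := by fun_prop
    exact congrFun (hNY _ hcx hcx.measurable hx)
  funext ⟨x, y⟩
  have hcy : Continuous fun x => h (x, y) := by fun_prop
  refine congrFun (hNX _ hcy hcy.measurable ?_) x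
  exact ae_iff.mp (hsections.mono fun x hx => hx y)

theorem stmt16 {X Y : Type*} [TopologicalSpace X] [TopologicalSpace Y]
    [mX : MeasurableSpace X] [mY : MeasurableSpace Y]
    (mXY : MeasurableSpace (X × Y))
    (μ : Measure X) (ν : Measure Y) (υ : @Measure (X × Y) mXY)
    [IsProbabilityMeasure μ] [IsProbabilityMeasure ν]
    (hυprob : @IsProbabilityMeasure _ mXY υ)
    -- the topologies consist of measurable sets
    (hSX : ∀ s : Set X, IsOpen s → MeasurableSet s)
    (hSY : ∀ s : Set Y, IsOpen s → MeasurableSet s)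
    (hC : PropC mXY μ ν υ)
    -- the only continuous `μ`-null function on `X` is `0`
    (hNX : ∀ f : X → ℝ, Continuous f → Measurable f → μ {x | f x ≠ 0} = 0 → f = 0)
    -- the only continuous `ν`-null function on `Y` is `0`
    (hNY : ∀ g : Y → ℝ, Continuous g → Measurable g → ν {y | g y ≠ 0} = 0 → g = 0) :
    -- then the only continuous `υ`-null function on `X × Y` is `0`
    ∀ h : X × Y → ℝ, Continuous h → Measurable[mXY] h → υ {z | h z ≠ 0} = 0 → h = 0 :=
  stmt16_general (mX := mX) (mY := mY) mXY μ ν υ hSX hSY hC hNX hNY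
end

section
/- Let $X$ be a set, $\mathcal{I}$ an upwards directed family of subsets of $X$. For each $x \in X$, let $(Y, T_x)$ be a measurable space and $J_x$ an ideal of $T_x$. Let $\Upsilon$ be a $\sigma$-algebra on $X \times Y$ with $\Upsilon \subseteq \mathcal{I} \ltimes T$, and set $\mathcal{K} = \mathcal{I} \ltimes J$. If $h \colon X \times Y \to \mathbb{R}$ satisfies: there exist $N \in \mathcal{I}$ such that for all $x \notin N$, $h_x$ is $T_x$-measurable and $\{y : h_x(y) \neq 0\} \in J_x$; then $h$ is measurable with respect to the $\sigma$-algebra $\Upsilon_\mathcal{K} = \{A \mathbin{\triangle} K : A \in \Upsilon, K \in \mathcal{K}\}$ and $\{(x,y) : h(x,y) \neq 0\} \in \mathcal{K}$. -/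
/-- A σ-algebra of subsets. -/
def IsSigmaAlg {Y : Type*} (A : Set (Set Y)) : Prop :=
  ∅ ∈ A ∧ (∀ s ∈ A, sᶜ ∈ A) ∧ ∀ f : ℕ → Set Y, (∀ n, f n ∈ A) → (⋃ n, f n) ∈ A

/-- `I` is an ideal of the family `B`: a subfamily of `B` containing `∅`, closed under
finite unions and downward closed within `B`. -/
def IsIdealOf {Y : Type*} (I B : Set (Set Y)) : Prop :=
  I ⊆ B ∧ ∅ ∈ I ∧ (∀ s ∈ I, ∀ t ∈ I, s ∪ t ∈ I) ∧ ∀ s ∈ I, ∀ t ∈ B, t ⊆ s → t ∈ I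

/-- The skew product `𝒮 ⋉ 𝒯`. -/
def Skew {X Y : Type*} (S : Set (Set X)) (T : X → Set (Set Y)) : Set (Set (X × Y)) :=
  {E : Set (X × Y) | ∃ N ∈ S, ∀ x ∉ N, {y | (x, y) ∈ E} ∈ T x}

theorem stmt17 {X Y : Type*} (I : Set (Set X)) (T J : X → Set (Set Y))
    (Υ : Set (Set (X × Y)))
    -- `I` is upwards directed
    (hIdir : ∀ a ∈ I, ∀ b ∈ I, ∃ c ∈ I, a ⊆ c ∧ b ⊆ c)
    (hT : ∀ x, IsSigmaAlg (T x))
    (hJ : ∀ x, IsIdealOf (J x) (T x))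
    (hΥalg : IsSigmaAlg Υ) (hΥsub : Υ ⊆ Skew I T)
    (h : X × Y → ℝ)
    (hh : ∃ N ∈ I, ∀ x ∉ N,
      (∀ s : Set ℝ, MeasurableSet s → (fun y => h (x, y)) ⁻¹' s ∈ T x) ∧
      {y | h (x, y) ≠ 0} ∈ J x) :
    -- `h` is `Υ_𝒦`-measurable, where `𝒦 = I ⋉ J`, and `{h ≠ 0} ∈ 𝒦`
    (∀ s : Set ℝ, MeasurableSet s →
      h ⁻¹' s ∈ {E : Set (X × Y) | ∃ A ∈ Υ, ∃ k ∈ Skew I J, E = symmDiff A k}) ∧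
    {z : X × Y | h z ≠ 0} ∈ Skew I J := by

  obtain ⟨N, hN, hNx⟩ := hh
  have hne : {z : X × Y | h z ≠ 0} ∈ Skew I J := by
    exact ⟨N, hN, fun x hx => (hNx x hx).2⟩
  refine ⟨fun s hs => ?_, hne⟩
  by_cases h0 : (0 : ℝ) ∈ s
  · -- A = univ, k = h ⁻¹' sᶜ
    refine ⟨Set.univ, ?_, h ⁻¹' sᶜ, ?_, ?_⟩
    · have := hΥalg.2.1 ∅ hΥalg.1
      simpa using this
    · refine ⟨N, hN, fun x hx => ?_⟩
      have hmeas := (hNx x hx).1 sᶜ hs.compl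
      have hsub : {y | (x, y) ∈ h ⁻¹' sᶜ} ⊆ {y | h (x, y) ≠ 0} := by
        intro y hy h0'
        exact hy (by simpa [h0'] using h0)
      exact (hJ x).2.2.2 _ (hNx x hx).2 _ hmeas hsub
    · ext z
      simp [symmDiff_def, Set.mem_preimage]
  · refine ⟨∅, hΥalg.1, h ⁻¹' s, ?_, ?_⟩
    · refine ⟨N, hN, fun x hx => ?_⟩
      have hmeas := (hNx x hx).1 s hs
      have hsub : {y | (x, y) ∈ h ⁻¹' s} ⊆ {y | h (x, y) ≠ 0} := by
        intro y hy h0'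
        exact h0 (by simpa [h0'] using hy)
      exact (hJ x).2.2.2 _ (hNx x hx).2 _ hmeas hsub
    · simp [symmDiff_def]
end

section
/- Let $X$ be a set, $\mathcal{I}$ an upwards $\sigma$-directed family of subsets of $X$, $(Y, T_x)_{x \in X}$ measurable spaces, and $(X \times Y, \Upsilon)$ a measurable space with $\Upsilon \subseteq \mathcal{I} \ltimes T$ where $T = (T_x)_{x \in X}$. Let $Z$ be a separable metrizable space and $h \colon X \times Y \to Z$ a $\Upsilon$-measurable function. Then there exists $I \in \mathcal{I}$ such that the vertical section $h_x \colon Y \to Z$ is $T_x$-measurable for every $x \notin I$. -/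
theorem stmt18 {X Y Z : Type*}
    [TopologicalSpace Z] [TopologicalSpace.SeparableSpace Z]
    [TopologicalSpace.MetrizableSpace Z] [MeasurableSpace Z] [BorelSpace Z]
    (I : Set (Set X)) (T : X → Set (Set Y)) (Υ : Set (Set (X × Y)))
    -- `I` is upwards σ-directed: every countable subfamily has an upper bound in `I`
    (hIdir : ∀ C : Set (Set X), C.Countable → C ⊆ I → ∃ N ∈ I, ∀ c ∈ C, c ⊆ N)
    (hT : ∀ x, IsSigmaAlg (T x))
    (hΥalg : IsSigmaAlg Υ) (hΥsub : Υ ⊆ Skew I T)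
    (h : X × Y → Z)
    (hh : ∀ s : Set Z, MeasurableSet s → h ⁻¹' s ∈ Υ) :
    ∃ N ∈ I, ∀ x ∉ N, ∀ s : Set Z, MeasurableSet s →
      (fun y => h (x, y)) ⁻¹' s ∈ T x := by
  haveI : SecondCountableTopology Z := by
    letI := TopologicalSpace.metrizableSpaceMetric Z
    exact UniformSpace.secondCountable_of_separable Z
  obtain ⟨b, hbc, -, hbb⟩ := TopologicalSpace.exists_countable_basis Z
  have key : ∀ U : b, ∃ N ∈ I, ∀ x ∉ N, {y | (x, y) ∈ h ⁻¹' (U : Set Z)} ∈ T x := fun U =>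
    hΥsub (hh U (hbb.isOpen U.2).measurableSet)
  choose g hgI hgT using key
  haveI : Countable b := hbc.to_subtype
  obtain ⟨N, hNI, hNb⟩ := hIdir (Set.range g) (Set.countable_range g)
    (by rintro _ ⟨U, rfl⟩; exact hgI U)
  refine ⟨N, hNI, fun x hx s hs => ?_⟩
  have hgen : ‹MeasurableSpace Z› = MeasurableSpace.generateFrom b := by
    rw [BorelSpace.measurable_eq (α := Z), hbb.borel_eq_generateFrom]
  let M : MeasurableSpace Z :=
    { MeasurableSet' := fun s => (fun y => h (x, y)) ⁻¹' s ∈ T x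
      measurableSet_empty := by simpa using (hT x).1
      measurableSet_compl := fun s hs => by
        have := (hT x).2.1 _ hs
        simpa using this
      measurableSet_iUnion := fun f hf => by
        have := (hT x).2.2 (fun n => (fun y => h (x, y)) ⁻¹' f n) hf
        simpa [Set.preimage_iUnion] using this }
  have hle : MeasurableSpace.generateFrom b ≤ M := by
    refine MeasurableSpace.generateFrom_le fun U hU => ?_
    have hxU : x ∉ g ⟨U, hU⟩ := fun hxg => hx (hNb _ ⟨⟨U, hU⟩, rfl⟩ hxg)
    exact hgT ⟨U, hU⟩ x hxU
  exact hle s (hgen ▸ hs)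
end
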